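/- If T is a tree obtained from T_i^1 (strength i, unique minimal coloring with root colored i) by attaching t additional copies of T_{i−1}^1 as child subtrees of the root, then s(T) = i and Δ(T) = 2i − 2 + t. -/

import Mathlib

/-- A rooted tree with a natural-number color at each vertex. -/
inductive CTree where
  | node : ℕ → List CTree → CTree

namespace CTree

/-- The color of the root. -/
def color : CTree → ℕ
  | node c _ => c

/-- The list of child subtrees of the root. -/
def children : CTree → List CTree
  | node _ l => l

/-- The sum of all colors in the tree. -/
def sumColors : CTree → ℕ
  | node c l => c + (l.attach.map fun ⟨t, _⟩ => sumColors t).sum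
decreasing_by
  simp only [CTree.node.sizeOf_spec]
  rename_i hm
  have := List.sizeOf_lt_of_mem hm
  omega

/-- The maximum color used in the tree. -/
def maxColor : CTree → ℕ
  | node c l => max c ((l.attach.map fun ⟨t, _⟩ => maxColor t).foldr max 0)
decreasing_by
  simp only [CTree.node.sizeOf_spec]
  rename_i hm
  have := List.sizeOf_lt_of_mem hm
  omega

/-- The coloring is proper: colors are positive and each child's root color
differs from its parent's color. -/
def Proper : CTree → Prop
  | node c l => 1 ≤ c ∧ ∀ t ∈ l, color t ≠ c ∧ Proper t
decreasing_by
  simp only [CTree.node.sizeOf_spec]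
  rename_i hm
  have := List.sizeOf_lt_of_mem hm
  omega

/-- Two colored rooted trees have the same underlying (rooted) tree shape. -/
def SameShape : CTree → CTree → Prop
  | node _ l, node _ l' => l.length = l'.length ∧ ∀ p ∈ l.zip l', SameShape p.1 p.2
termination_by t _ => sizeOf t
decreasing_by
  simp only [CTree.node.sizeOf_spec]
  rename_i hm
  have := List.sizeOf_lt_of_mem (List.of_mem_zip hm).1
  omega

/-- The maximum degree among vertices of a subtree hanging below a root
(the subtree's own root has an extra edge to its parent). -/
def maxDegAux : CTree → ℕ
  | node _ l => max (l.length + 1) ((l.attach.map fun ⟨t, _⟩ => maxDegAux t).foldr max 0)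
decreasing_by
  simp only [CTree.node.sizeOf_spec]
  rename_i hm
  have := List.sizeOf_lt_of_mem hm
  omega

/-- The maximum degree of the rooted tree. -/
def maxDeg : CTree → ℕ
  | node _ l => max l.length ((l.attach.map fun ⟨t, _⟩ => maxDegAux t).foldr max 0)

/-- The set of colors used in the tree. -/
def colorFinset : CTree → Finset ℕ
  | node c l => insert c ((l.attach.map fun ⟨t, _⟩ => colorFinset t).foldr (· ∪ ·) ∅)
decreasing_by
  simp only [CTree.node.sizeOf_spec]
  rename_i hm
  have := List.sizeOf_lt_of_mem hm
  omega

end CTree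

open CTree in
/-- The tree `T_i^j` of the construction, together with its coloring `f_i^j`:
the root is colored `i` and has, for each `k` with `1 ≤ k ≤ i+j-1` and `k ≠ i`,
two child copies of `T_k^{⌈(i+j-k)/2⌉}` colored by `f_k^{⌈(i+j-k)/2⌉}`. -/
def buildT (i j : ℕ) : CTree :=
  if j = 0 ∨ i + j ≤ 2 then .node i []
  else .node i <|
    (List.range (i + j - 1)).attach.flatMap fun ⟨k', _⟩ =>
      let k := k' + 1
      if k = i then []
      else
        let m := (i + j - k + 1) / 2
        [buildT k m, buildT k m]
termination_by (i + j, j)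
decreasing_by
  all_goals
  · rename_i hcond hmem hne
    have hk' : k' < i + j - 1 := List.mem_range.mp hmem
    push_neg at hcond
    rcases Nat.lt_or_ge (k' + 1 + (i + j - (k' + 1) + 1) / 2) (i + j) with hlt | hge
    · exact Prod.Lex.left _ _ hlt
    · have heq : k' + 1 + (i + j - (k' + 1) + 1) / 2 = i + j := by omega
      rw [heq]
      exact Prod.Lex.right _ (by omega)

/-- The strength of (the shape of) a colored rooted tree: the minimum number of
distinct colors used by a proper coloring of the same shape achieving the
minimum color sum. -/
noncomputable def strengthC (t : CTree) : ℕ :=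
  sInf {n | ∃ g : CTree, CTree.SameShape t g ∧ CTree.Proper g ∧
    (∀ g' : CTree, CTree.SameShape t g' → CTree.Proper g' →
      CTree.sumColors g ≤ CTree.sumColors g') ∧
    g.colorFinset.card = n}

namespace CTree

theorem sumColors_node (c : ℕ) (l : List CTree) :
    sumColors (node c l) = c + (l.map sumColors).sum := by
  rw [sumColors]; simp

theorem proper_node (c : ℕ) (l : List CTree) :
    Proper (node c l) ↔ 1 ≤ c ∧ ∀ t ∈ l, color t ≠ c ∧ Proper t := by
  rw [Proper]

theorem sameShape_node (c : ℕ) (l : List CTree) (c' : ℕ) (l' : List CTree) :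
    SameShape (node c l) (node c' l') ↔
      l.length = l'.length ∧ ∀ p ∈ l.zip l', SameShape p.1 p.2 := by
  rw [SameShape]

theorem colorFinset_node (c : ℕ) (l : List CTree) :
    colorFinset (node c l) = insert c ((l.map colorFinset).foldr (· ∪ ·) ∅) := by
  rw [colorFinset]; simp

theorem maxDegAux_node (c : ℕ) (l : List CTree) :
    maxDegAux (node c l) = max (l.length + 1) ((l.map maxDegAux).foldr max 0) := by
  rw [maxDegAux]; simp

theorem maxDeg_node (c : ℕ) (l : List CTree) :
    maxDeg (node c l) = max l.length ((l.map maxDegAux).foldr max 0) := by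
  rw [maxDeg]; simp

theorem myInd (P : CTree → Prop) (h : ∀ c l, (∀ t ∈ l, P t) → P (node c l)) :
    ∀ t, P t
  | node c l => h c l fun t ht => myInd P h t
decreasing_by
  simp only [CTree.node.sizeOf_spec]
  have := List.sizeOf_lt_of_mem ht
  omega

theorem mem_zip_self {α : Type*} : ∀ (l : List α) (p : α × α), p ∈ l.zip l → p.1 = p.2
  | [], p, h => by simp at h
  | a :: l, p, h => by
      rw [List.zip_cons_cons] at h
      rcases List.mem_cons.mp h with rfl | h
      · rfl
      · exact mem_zip_self l p h

theorem sameShape_refl : ∀ t : CTree, SameShape t t := by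
  refine myInd _ fun c l ih => ?_
  rw [sameShape_node]
  exact ⟨rfl, fun p hp => by rw [mem_zip_self l p hp]; exact ih p.2 (List.of_mem_zip hp).2⟩

theorem mem_foldr_union (l : List CTree) (x : ℕ) :
    x ∈ (l.map colorFinset).foldr (· ∪ ·) (∅ : Finset ℕ) ↔ ∃ τ ∈ l, x ∈ colorFinset τ := by
  induction l with
  | nil => simp
  | cons a l ih => simp [ih]

theorem foldr_max_le (l : List CTree) (b : ℕ) (h : ∀ x ∈ l, maxDegAux x ≤ b) :
    (l.map maxDegAux).foldr max 0 ≤ b := by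
  induction l with
  | nil => simp
  | cons a l ih =>
      simp only [List.map_cons, List.foldr_cons, max_le_iff]
      exact ⟨h a (by simp), ih fun x hx => h x (List.mem_cons_of_mem _ hx)⟩

end CTree

open CTree

theorem sum_le_sum_zip : ∀ (L l' : List CTree) (f h : CTree → ℕ),
    L.length = l'.length → (∀ p ∈ L.zip l', f p.1 ≤ h p.2) →
    (L.map f).sum ≤ (l'.map h).sum
  | [], [], f, h, _, _ => le_refl _
  | a :: L, b :: l', f, h, hl, hp => by
      simp only [List.map_cons, List.sum_cons]
      have h1 : f a ≤ h b := hp (a, b) (by simp [List.zip_cons_cons])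
      have h2 := sum_le_sum_zip L l' f h (by simpa using hl)
        (fun p hq => hp p (by simp [List.zip_cons_cons, hq]))
      omega

theorem zip_sum_eq : ∀ (L l' : List CTree) (f h : CTree → ℕ),
    L.length = l'.length → (∀ p ∈ L.zip l', f p.1 ≤ h p.2) →
    (L.map f).sum = (l'.map h).sum →
    ∀ p ∈ L.zip l', f p.1 = h p.2
  | [], [], f, h, _, _, _ => by simp
  | a :: L, b :: l', f, h, hl, hp, hs => by
      have h1 : f a ≤ h b := hp (a, b) (by simp [List.zip_cons_cons])
      have h2 := sum_le_sum_zip L l' f h (by simpa using hl)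
        (fun p hq => hp p (by simp [List.zip_cons_cons, hq]))
      simp only [List.map_cons, List.sum_cons] at hs
      intro p hpz
      rw [List.zip_cons_cons] at hpz
      rcases List.mem_cons.mp hpz with rfl | hmem
      · show f a = h b
        omega
      · exact zip_sum_eq L l' f h (by simpa using hl)
          (fun q hq => hp q (by simp [List.zip_cons_cons, hq])) (by omega) p hmem

theorem zip_eq_of_pointwise : ∀ (L l' : List CTree),
    L.length = l'.length → (∀ p ∈ L.zip l', p.1 = p.2) → L = l'
  | [], [], _, _ => rfl
  | a :: L, b :: l', hl, hp => by
      have h1 : a = b := hp (a, b) (by simp [List.zip_cons_cons])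
      have h2 := zip_eq_of_pointwise L l' (by simpa using hl)
        (fun p hq => hp p (by simp [List.zip_cons_cons, hq]))
      simp [h1, h2]

/-- The list of child subtrees in the non-degenerate case of `buildT`. -/
def TList (i j : ℕ) : List CTree :=
  (List.range (i + j - 1)).attach.flatMap fun ⟨k', _⟩ =>
    if k' + 1 = i then []
    else [buildT (k' + 1) ((i + j - (k' + 1) + 1) / 2),
          buildT (k' + 1) ((i + j - (k' + 1) + 1) / 2)]

theorem buildT_eq_node (i j : ℕ) (h : ¬(j = 0 ∨ i + j ≤ 2)) :
    buildT i j = .node i (TList i j) := by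
  rw [buildT, if_neg h]
  rfl

theorem buildT_eq_leaf (i j : ℕ) (h : j = 0 ∨ i + j ≤ 2) :
    buildT i j = .node i [] := by
  rw [buildT, if_pos h]

theorem buildT_color (i j : ℕ) : color (buildT i j) = i := by
  by_cases h : j = 0 ∨ i + j ≤ 2
  · rw [buildT_eq_leaf i j h]; rfl
  · rw [buildT_eq_node i j h]; rfl

theorem mem_TList {i j : ℕ} {τ : CTree} (h : τ ∈ TList i j) :
    ∃ k, 1 ≤ k ∧ k ≤ i + j - 1 ∧ k ≠ i ∧ τ = buildT k ((i + j - k + 1) / 2) := by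
  rw [TList] at h
  obtain ⟨⟨k', hk'⟩, -, hmem⟩ := List.mem_flatMap.mp h
  dsimp only at hmem
  by_cases hki : k' + 1 = i
  · simp [hki] at hmem
  · rw [if_neg hki] at hmem
    have hr : k' < i + j - 1 := List.mem_range.mp hk'
    rcases List.mem_cons.mp hmem with rfl | hmem2
    · exact ⟨k' + 1, by omega, by omega, hki, rfl⟩
    · rcases List.mem_cons.mp hmem2 with rfl | h3
      · exact ⟨k' + 1, by omega, by omega, hki, rfl⟩
      · simp at h3

theorem TList_mem {i j k : ℕ} (h1 : 1 ≤ k) (h2 : k ≤ i + j - 1) (h3 : k ≠ i) :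
    buildT k ((i + j - k + 1) / 2) ∈ TList i j := by
  rw [TList]
  refine List.mem_flatMap.mpr ⟨⟨k - 1, List.mem_range.mpr (by omega)⟩, List.mem_attach _ _, ?_⟩
  dsimp only
  have hk : k - 1 + 1 = k := by omega
  rw [hk, if_neg h3]
  simp

theorem TList_map_sum (i j : ℕ) (f : CTree → ℕ) :
    ((TList i j).map f).sum =
      ∑ k ∈ Finset.range (i + j - 1),
        (if k + 1 = i then 0 else 2 * f (buildT (k + 1) ((i + j - (k + 1) + 1) / 2))) := by
  rw [TList]
  rw [show ((List.range (i + j - 1)).attach.flatMap fun (x : {x // x ∈ List.range (i+j-1)}) =>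
      if x.1 + 1 = i then []
      else [buildT (x.1 + 1) ((i + j - (x.1 + 1) + 1) / 2),
            buildT (x.1 + 1) ((i + j - (x.1 + 1) + 1) / 2)]) =
    (List.range (i + j - 1)).flatMap fun k =>
      if k + 1 = i then []
      else [buildT (k + 1) ((i + j - (k + 1) + 1) / 2),
            buildT (k + 1) ((i + j - (k + 1) + 1) / 2)] from by simp]
  rw [show (∑ k ∈ Finset.range (i + j - 1),
        (if k + 1 = i then 0 else 2 * f (buildT (k + 1) ((i + j - (k + 1) + 1) / 2)))) =
      ((List.range (i + j - 1)).map fun k =>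
        (if k + 1 = i then 0 else 2 * f (buildT (k + 1) ((i + j - (k + 1) + 1) / 2)))).sum from rfl]
  induction (List.range (i + j - 1)) with
  | nil => simp
  | cons a l ih =>
      rw [List.flatMap_cons, List.map_append, List.sum_append, ih, List.map_cons, List.sum_cons]
      congr 1
      by_cases ha : a + 1 = i
      · simp [ha]
      · rw [if_neg ha, if_neg ha]
        simp [two_mul]

theorem TList_length (i j : ℕ) (hij : 1 ≤ i) (hji : i ≤ i + j - 1) :
    (TList i j).length = 2 * (i + j - 1) - 2 := by
  rw [TList]
  rw [show ((List.range (i + j - 1)).attach.flatMap fun (x : {x // x ∈ List.range (i+j-1)}) =>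
      if x.1 + 1 = i then []
      else [buildT (x.1 + 1) ((i + j - (x.1 + 1) + 1) / 2),
            buildT (x.1 + 1) ((i + j - (x.1 + 1) + 1) / 2)]) =
    (List.range (i + j - 1)).flatMap fun k =>
      if k + 1 = i then []
      else [buildT (k + 1) ((i + j - (k + 1) + 1) / 2),
            buildT (k + 1) ((i + j - (k + 1) + 1) / 2)] from by simp]
  rw [List.length_flatMap]
  have : ∀ k : ℕ, ((fun k =>
      if k + 1 = i then ([] : List CTree)
      else [buildT (k + 1) ((i + j - (k + 1) + 1) / 2),
            buildT (k + 1) ((i + j - (k + 1) + 1) / 2)]) k).length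
      = if k = i - 1 then 0 else 2 := by
    intro k
    dsimp only
    by_cases hk : k + 1 = i
    · simp [hk, if_pos (by omega : k = i - 1)]
    · rw [if_neg hk, if_neg (by omega : ¬ k = i - 1)]
      rfl
  rw [show (List.map (fun k => (if k + 1 = i then ([] : List CTree)
      else [buildT (k + 1) ((i + j - (k + 1) + 1) / 2),
            buildT (k + 1) ((i + j - (k + 1) + 1) / 2)]).length) (List.range (i + j - 1))).sum
    = ∑ k ∈ Finset.range (i + j - 1), (if k = i - 1 then 0 else 2) from by
      rw [show (∑ k ∈ Finset.range (i + j - 1), (if k = i - 1 then 0 else 2)) =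
        ((List.range (i + j - 1)).map fun k => (if k = i - 1 then 0 else 2)).sum from rfl]
      congr 1
      apply List.map_congr_left
      intro a _
      exact this a]
  have hmem : i - 1 ∈ Finset.range (i + j - 1) := Finset.mem_range.mpr (by omega)
  rw [← Finset.add_sum_erase _ _ hmem, if_pos rfl]
  rw [Finset.sum_congr rfl (fun x hx => if_neg (Finset.mem_erase.mp hx).1)]
  rw [Finset.sum_const, Finset.card_erase_of_mem hmem, Finset.card_range]
  simp only [smul_eq_mul, zero_add]
  omega

theorem buildT_proper (i j : ℕ) (hi : 1 ≤ i) : Proper (buildT i j) := by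
  by_cases h : j = 0 ∨ i + j ≤ 2
  · rw [buildT_eq_leaf i j h, proper_node]
    exact ⟨hi, by simp⟩
  · rw [buildT_eq_node i j h, proper_node]
    refine ⟨hi, fun τ hτ => ?_⟩
    obtain ⟨k, hk1, hk2, hk3, rfl⟩ := mem_TList hτ
    rw [buildT_color]
    exact ⟨hk3, buildT_proper k ((i + j - k + 1) / 2) hk1⟩
termination_by (i + j, j)
decreasing_by
  rcases Nat.lt_or_ge (k + (i + j - k + 1) / 2) (i + j) with hlt | hge
  · exact Prod.Lex.left _ _ hlt
  · have heq : k + (i + j - k + 1) / 2 = i + j := by omega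
    rw [heq]
    exact Prod.Lex.right _ (by omega)

theorem buildT_min (i j : ℕ) (hi : 1 ≤ i) (hj : 1 ≤ j) :
    ∀ g : CTree, SameShape (buildT i j) g → Proper g →
      (sumColors (buildT i j) + (if color g = i then 0 else j) ≤ sumColors g) ∧
      (sumColors g = sumColors (buildT i j) → g = buildT i j) := by
  intro g hs hp
  by_cases hdeg : j = 0 ∨ i + j ≤ 2
  · -- degenerate: i = j = 1
    have hij : i = 1 ∧ j = 1 := by omega
    obtain ⟨rfl, rfl⟩ := hij
    rw [buildT_eq_leaf 1 1 (by omega)] at hs ⊢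
    obtain ⟨c, l'⟩ := g
    rw [sameShape_node] at hs
    have hl' : l' = [] := by
      have := hs.1; simpa using List.length_eq_zero_iff.mp this.symm
    subst hl'
    rw [proper_node] at hp
    simp only [sumColors_node, color, List.map_nil, List.sum_nil, add_zero]
    constructor
    · have := hp.1
      by_cases h1 : c = 1 <;> simp [h1] <;> omega
    · intro h
      have : c = 1 := by omega
      rw [this]
  · -- main case
    have hT := buildT_eq_node i j hdeg
    rw [hT] at hs ⊢
    obtain ⟨c, l'⟩ := g
    rw [sameShape_node] at hs
    obtain ⟨hlen, hpair⟩ := hs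
    rw [proper_node] at hp
    obtain ⟨hc, hprop⟩ := hp
    set φ : CTree → ℕ :=
      fun τ => sumColors τ + (if color τ = c then (i + j - c + 1) / 2 else 0) with hφdef
    have key : ∀ p ∈ (TList i j).zip l',
        (φ p.1 ≤ sumColors p.2) ∧ (sumColors p.2 = sumColors p.1 → p.2 = p.1) := by
      intro p hp2
      obtain ⟨hmem1, hmem2⟩ := List.of_mem_zip hp2
      obtain ⟨k, hk1, hk2, hk3, hpeq⟩ := mem_TList hmem1
      have hss := hpair p hp2
      have hps := hprop p.2 hmem2
      rw [hpeq] at hss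
      have hm1 : 1 ≤ (i + j - k + 1) / 2 := by omega
      have IH := buildT_min k ((i + j - k + 1) / 2) hk1 hm1 p.2 hss hps.2
      constructor
      · rw [hφdef]
        dsimp only
        rw [hpeq, buildT_color]
        by_cases hkc : k = c
        · rw [if_pos hkc]
          have h2 := IH.1
          rw [if_neg (by rw [← hkc] at hps; exact hps.1)] at h2
          rw [hkc] at h2 ⊢
          exact h2
        · rw [if_neg hkc]
          have h2 := IH.1
          have := le_trans (Nat.le_add_right (sumColors (buildT k ((i + j - k + 1) / 2))) _) h2
          simpa using this
      · intro hse
        rw [hpeq] at hse ⊢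
        exact IH.2 hse
    have key1 : ∀ p ∈ (TList i j).zip l', φ p.1 ≤ sumColors p.2 := fun p hp2 => (key p hp2).1
    have hsum := sum_le_sum_zip (TList i j) l' φ sumColors hlen key1
    -- compute the φ-sum
    have hφsum : ((TList i j).map φ).sum = ((TList i j).map sumColors).sum +
        (if c ≠ i ∧ 1 ≤ c ∧ c ≤ i + j - 1 then 2 * ((i + j - c + 1) / 2) else 0) := by
      rw [TList_map_sum i j φ, TList_map_sum i j sumColors]
      have hterm : ∀ k ∈ Finset.range (i + j - 1),
          (if k + 1 = i then 0 else 2 * φ (buildT (k + 1) ((i + j - (k + 1) + 1) / 2))) =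
          (if k + 1 = i then 0
            else 2 * sumColors (buildT (k + 1) ((i + j - (k + 1) + 1) / 2))) +
          (if k + 1 = c ∧ c ≠ i then 2 * ((i + j - c + 1) / 2) else 0) := by
        intro k _
        rw [hφdef]
        dsimp only
        rw [buildT_color]
        by_cases hki : k + 1 = i
        · rw [if_pos hki, if_pos hki, if_neg (by omega), zero_add]
        · rw [if_neg hki, if_neg hki]
          by_cases hkc : k + 1 = c
          · rw [if_pos hkc, if_pos ⟨hkc, by omega⟩]
            omega
          · rw [if_neg hkc, if_neg (by tauto)]
            omega
      rw [Finset.sum_congr rfl hterm, Finset.sum_add_distrib]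
      congr 1
      by_cases hcond : c ≠ i ∧ 1 ≤ c ∧ c ≤ i + j - 1
      · rw [if_pos hcond]
        have : ∀ k ∈ Finset.range (i + j - 1),
            (if k + 1 = c ∧ c ≠ i then 2 * ((i + j - c + 1) / 2) else 0) =
            (if k = c - 1 then 2 * ((i + j - c + 1) / 2) else 0) := by
          intro k _
          by_cases hkc : k + 1 = c
          · rw [if_pos ⟨hkc, hcond.1⟩, if_pos (by omega)]
          · rw [if_neg (by tauto), if_neg (by omega)]
        rw [Finset.sum_congr rfl this,
          Finset.sum_ite_eq' (Finset.range (i + j - 1)) (c - 1),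
          if_pos (Finset.mem_range.mpr (by omega))]
      · rw [if_neg hcond]
        refine Finset.sum_eq_zero fun k hk => ?_
        rw [if_neg]
        rintro ⟨h1, h2⟩
        have := Finset.mem_range.mp hk
        exact hcond ⟨h2, by omega, by omega⟩
    rw [hφsum] at hsum
    simp only [sumColors_node, color]
    constructor
    · by_cases hci : c = i
      · change (i + ((TList i j).map sumColors).sum + if c = i then 0 else j) ≤ c + (l'.map sumColors).sum; rw [if_pos hci, add_zero, hci]
        rw [if_neg (by omega)] at hsum
        omega
      · change (i + ((TList i j).map sumColors).sum + if c = i then 0 else j) ≤ c + (l'.map sumColors).sum; rw [if_neg hci]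
        by_cases hrange : 1 ≤ c ∧ c ≤ i + j - 1
        · rw [if_pos ⟨hci, hrange.1, hrange.2⟩] at hsum
          omega
        · rw [if_neg (by tauto)] at hsum
          have hcN : i + j ≤ c := by omega
          omega
    · intro heq
      -- first, root color must be i
      have hci : c = i := by
        by_contra hci
        by_cases hrange : 1 ≤ c ∧ c ≤ i + j - 1
        · rw [if_pos ⟨hci, hrange.1, hrange.2⟩] at hsum
          omega
        · rw [if_neg (by tauto)] at hsum
          have hcN : i + j ≤ c := by omega
          omega
      rw [if_neg (by omega)] at hsum
      have hbase : (l'.map sumColors).sum = ((TList i j).map sumColors).sum := by omega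
      have key2 : ∀ p ∈ (TList i j).zip l', sumColors p.1 ≤ sumColors p.2 := by
        intro p hp2
        have := (key p hp2).1
        rw [hφdef] at this
        dsimp only at this
        omega
      have hpw := zip_sum_eq (TList i j) l' sumColors sumColors hlen key2 hbase.symm
      have hll : l' = TList i j := by
        refine (zip_eq_of_pointwise (TList i j) l' hlen ?_).symm
        intro p hp2
        exact ((key p hp2).2 (hpw p hp2).symm).symm ▸ rfl
      rw [hll, hci]
termination_by (i + j, j)
decreasing_by
  rcases Nat.lt_or_ge (k + (i + j - k + 1) / 2) (i + j) with hlt | hge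
  · exact Prod.Lex.left _ _ hlt
  · have heq : k + (i + j - k + 1) / 2 = i + j := by omega
    rw [heq]
    exact Prod.Lex.right _ (by omega)

theorem buildT_colorFinset (i j : ℕ) (hi : 1 ≤ i) (hj : 1 ≤ j) :
    colorFinset (buildT i j) = Finset.Icc 1 (i + j - 1) := by
  by_cases hdeg : j = 0 ∨ i + j ≤ 2
  · have hij : i = 1 ∧ j = 1 := by omega
    obtain ⟨rfl, rfl⟩ := hij
    rw [buildT_eq_leaf _ _ hdeg, colorFinset_node]
    ext x
    simp [Finset.mem_Icc]
  · rw [buildT_eq_node _ _ hdeg, colorFinset_node]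
    ext x
    simp only [Finset.mem_insert, mem_foldr_union, Finset.mem_Icc]
    constructor
    · rintro (rfl | ⟨τ, hτ, hx⟩)
      · omega
      · obtain ⟨k, hk1, hk2, hk3, rfl⟩ := mem_TList hτ
        have hm1 : 1 ≤ (i + j - k + 1) / 2 := by omega
        rw [buildT_colorFinset k ((i + j - k + 1) / 2) hk1 hm1, Finset.mem_Icc] at hx
        omega
    · rintro ⟨hx1, hx2⟩
      by_cases hxi : x = i
      · exact Or.inl hxi
      · refine Or.inr ⟨buildT x ((i + j - x + 1) / 2), TList_mem hx1 hx2 hxi, ?_⟩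
        rw [buildT_colorFinset x ((i + j - x + 1) / 2) hx1 (by omega), Finset.mem_Icc]
        omega
termination_by (i + j, j)
decreasing_by
  all_goals
  first
  | (rcases Nat.lt_or_ge (k + (i + j - k + 1) / 2) (i + j) with hlt | hge
     exacts [Prod.Lex.left _ _ hlt, by
       have heq : k + (i + j - k + 1) / 2 = i + j := by omega
       rw [heq]; exact Prod.Lex.right _ (by omega)])
  | (rcases Nat.lt_or_ge (x + (i + j - x + 1) / 2) (i + j) with hlt | hge
     exacts [Prod.Lex.left _ _ hlt, by
       have heq : x + (i + j - x + 1) / 2 = i + j := by omega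
       rw [heq]; exact Prod.Lex.right _ (by omega)])

theorem buildT_maxDegAux (i j : ℕ) (hi : 1 ≤ i) (hj : 1 ≤ j) :
    maxDegAux (buildT i j) ≤ 2 * (i + j) - 3 := by
  by_cases hdeg : j = 0 ∨ i + j ≤ 2
  · rw [buildT_eq_leaf _ _ hdeg, maxDegAux_node]
    simp only [List.length_nil, List.map_nil, List.foldr_nil]
    apply max_le <;> omega
  · rw [buildT_eq_node _ _ hdeg, maxDegAux_node]
    have hlen := TList_length i j hi (by omega)
    apply max_le
    · omega
    · apply foldr_max_le
      intro τ hτ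
      obtain ⟨k, hk1, hk2, hk3, rfl⟩ := mem_TList hτ
      have hrec := buildT_maxDegAux k ((i + j - k + 1) / 2) hk1 (by omega)
      omega
termination_by (i + j, j)
decreasing_by
  rcases Nat.lt_or_ge (k + (i + j - k + 1) / 2) (i + j) with hlt | hge
  · exact Prod.Lex.left _ _ hlt
  · have heq : k + (i + j - k + 1) / 2 = i + j := by omega
    rw [heq]
    exact Prod.Lex.right _ (by omega)

theorem TList_bound (i j c : ℕ) (l' : List CTree)
    (hlen : (TList i j).length = l'.length)
    (hpair : ∀ p ∈ (TList i j).zip l', SameShape p.1 p.2)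
    (hprop : ∀ s ∈ l', color s ≠ c ∧ Proper s) :
    (((TList i j).map sumColors).sum +
      (if c ≠ i ∧ 1 ≤ c ∧ c ≤ i + j - 1 then 2 * ((i + j - c + 1) / 2) else 0)
      ≤ (l'.map sumColors).sum) ∧
    ((l'.map sumColors).sum = ((TList i j).map sumColors).sum → l' = TList i j) := by
  set φ : CTree → ℕ :=
    fun τ => sumColors τ + (if color τ = c then (i + j - c + 1) / 2 else 0) with hφdef
  have key : ∀ p ∈ (TList i j).zip l',
      (φ p.1 ≤ sumColors p.2) ∧ (sumColors p.2 = sumColors p.1 → p.2 = p.1) := by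
    intro p hp2
    obtain ⟨hmem1, hmem2⟩ := List.of_mem_zip hp2
    obtain ⟨k, hk1, hk2, hk3, hpeq⟩ := mem_TList hmem1
    have hss := hpair p hp2
    have hps := hprop p.2 hmem2
    rw [hpeq] at hss
    have hm1 : 1 ≤ (i + j - k + 1) / 2 := by omega
    have IH := buildT_min k ((i + j - k + 1) / 2) hk1 hm1 p.2 hss hps.2
    constructor
    · rw [hφdef]
      dsimp only
      rw [hpeq, buildT_color]
      by_cases hkc : k = c
      · rw [if_pos hkc]
        have h2 := IH.1
        rw [if_neg (by rw [← hkc] at hps; exact hps.1)] at h2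
        rw [hkc] at h2 ⊢
        exact h2
      · rw [if_neg hkc]
        have h2 := IH.1
        have := le_trans (Nat.le_add_right (sumColors (buildT k ((i + j - k + 1) / 2))) _) h2
        simpa using this
    · intro hse
      rw [hpeq] at hse ⊢
      exact IH.2 hse
  have key1 : ∀ p ∈ (TList i j).zip l', φ p.1 ≤ sumColors p.2 := fun p hp2 => (key p hp2).1
  have hsum := sum_le_sum_zip (TList i j) l' φ sumColors hlen key1
  have hφsum : ((TList i j).map φ).sum = ((TList i j).map sumColors).sum +
      (if c ≠ i ∧ 1 ≤ c ∧ c ≤ i + j - 1 then 2 * ((i + j - c + 1) / 2) else 0) := by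
    rw [TList_map_sum i j φ, TList_map_sum i j sumColors]
    have hterm : ∀ k ∈ Finset.range (i + j - 1),
        (if k + 1 = i then 0 else 2 * φ (buildT (k + 1) ((i + j - (k + 1) + 1) / 2))) =
        (if k + 1 = i then 0
          else 2 * sumColors (buildT (k + 1) ((i + j - (k + 1) + 1) / 2))) +
        (if k + 1 = c ∧ c ≠ i then 2 * ((i + j - c + 1) / 2) else 0) := by
      intro k _
      rw [hφdef]
      dsimp only
      rw [buildT_color]
      by_cases hki : k + 1 = i
      · rw [if_pos hki, if_pos hki, if_neg (by omega), zero_add]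
      · rw [if_neg hki, if_neg hki]
        by_cases hkc : k + 1 = c
        · rw [if_pos hkc, if_pos ⟨hkc, by omega⟩]
          omega
        · rw [if_neg hkc, if_neg (by tauto)]
          omega
    rw [Finset.sum_congr rfl hterm, Finset.sum_add_distrib]
    congr 1
    by_cases hcond : c ≠ i ∧ 1 ≤ c ∧ c ≤ i + j - 1
    · rw [if_pos hcond]
      have hcg : ∀ k ∈ Finset.range (i + j - 1),
          (if k + 1 = c ∧ c ≠ i then 2 * ((i + j - c + 1) / 2) else 0) =
          (if k = c - 1 then 2 * ((i + j - c + 1) / 2) else 0) := by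
        intro k _
        by_cases hkc : k + 1 = c
        · rw [if_pos ⟨hkc, hcond.1⟩, if_pos (by omega)]
        · rw [if_neg (by tauto), if_neg (by omega)]
      rw [Finset.sum_congr rfl hcg,
        Finset.sum_ite_eq' (Finset.range (i + j - 1)) (c - 1),
        if_pos (Finset.mem_range.mpr (by omega))]
    · rw [if_neg hcond]
      refine Finset.sum_eq_zero fun k hk => ?_
      rw [if_neg]
      rintro ⟨h1, h2⟩
      have := Finset.mem_range.mp hk
      exact hcond ⟨h2, by omega, by omega⟩
  rw [hφsum] at hsum
  refine ⟨hsum, fun heq => ?_⟩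
  have key2 : ∀ p ∈ (TList i j).zip l', sumColors p.1 ≤ sumColors p.2 := by
    intro p hp2
    have := (key p hp2).1
    rw [hφdef] at this
    dsimp only at this
    omega
  have hpw := zip_sum_eq (TList i j) l' sumColors sumColors hlen key2 heq.symm
  refine (zip_eq_of_pointwise (TList i j) l' hlen ?_).symm
  intro p hp2
  exact ((key p hp2).2 (hpw p hp2).symm).symm ▸ rfl

theorem aug_min (i t : ℕ) (hi : 2 ≤ i) (g : CTree)
    (hs : SameShape (CTree.node i (List.replicate t (buildT (i - 1) 1) ++ TList i 1)) g)
    (hp : Proper g) :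
    (sumColors (CTree.node i (List.replicate t (buildT (i - 1) 1) ++ TList i 1)) +
      (if color g = i then 0 else 1) ≤ sumColors g) ∧
    (sumColors g = sumColors (CTree.node i (List.replicate t (buildT (i - 1) 1) ++ TList i 1)) →
      g = CTree.node i (List.replicate t (buildT (i - 1) 1) ++ TList i 1)) := by
  obtain ⟨c, l'⟩ := g
  rw [sameShape_node] at hs
  obtain ⟨hlen, hpair⟩ := hs
  rw [proper_node] at hp
  obtain ⟨hc, hprop⟩ := hp
  have hlenR : (List.replicate t (buildT (i - 1) 1)).length = t := List.length_replicate
  have hlen' : t + (TList i 1).length = l'.length := by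
    rw [← hlen, List.length_append, hlenR]
  have hAB : l' = l'.take t ++ l'.drop t := (List.take_append_drop t l').symm
  have hlenA : (l'.take t).length = t := by rw [List.length_take]; omega
  have hzip : (List.replicate t (buildT (i - 1) 1) ++ TList i 1).zip l' =
      (List.replicate t (buildT (i - 1) 1)).zip (l'.take t) ++ (TList i 1).zip (l'.drop t) := by
    conv_lhs => rw [hAB]
    rw [List.zip_append (by rw [hlenA, hlenR])]
  have hlenB : (TList i 1).length = (l'.drop t).length := by
    rw [List.length_drop]; omega
  have keyA : ∀ p ∈ (List.replicate t (buildT (i - 1) 1)).zip (l'.take t),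
      (sumColors p.1 ≤ sumColors p.2 ∧ (sumColors p.2 = sumColors p.1 → p.2 = p.1)) := by
    intro p hp2
    obtain ⟨h1, h2⟩ := List.of_mem_zip hp2
    have hp1 : p.1 = buildT (i - 1) 1 := List.eq_of_mem_replicate h1
    have hmem2 : p.2 ∈ l' := by rw [hAB]; exact List.mem_append_left _ h2
    have hps := hprop p.2 hmem2
    have hss := hpair p (by rw [hzip]; exact List.mem_append_left _ hp2)
    rw [hp1] at hss ⊢
    have IH := buildT_min (i - 1) 1 (by omega) le_rfl p.2 hss hps.2
    exact ⟨le_trans (Nat.le_add_right _ _) IH.1, IH.2⟩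
  have keyA1 := sum_le_sum_zip (List.replicate t (buildT (i - 1) 1)) (l'.take t)
    sumColors sumColors (by rw [hlenA, hlenR]) (fun p h => (keyA p h).1)
  have hpairB : ∀ p ∈ (TList i 1).zip (l'.drop t), SameShape p.1 p.2 :=
    fun p h => hpair p (by rw [hzip]; exact List.mem_append_right _ h)
  have hpropB : ∀ s ∈ l'.drop t, color s ≠ c ∧ Proper s :=
    fun s h => hprop s (by rw [hAB]; exact List.mem_append_right _ h)
  have hTB := TList_bound i 1 c (l'.drop t) hlenB hpairB hpropB
  have hsplit : (l'.map sumColors).sum =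
      ((l'.take t).map sumColors).sum + ((l'.drop t).map sumColors).sum := by
    conv_lhs => rw [hAB]
    simp
  have hRL : ((List.replicate t (buildT (i - 1) 1) ++ TList i 1).map sumColors).sum =
      ((List.replicate t (buildT (i - 1) 1)).map sumColors).sum +
      ((TList i 1).map sumColors).sum := by simp
  have main : i + ((List.replicate t (buildT (i - 1) 1) ++ TList i 1).map sumColors).sum +
      (if c = i then 0 else 1) ≤ c + (l'.map sumColors).sum := by
    rw [hRL, hsplit]
    by_cases hci : c = i
    · rw [if_pos hci]
      have h1 := hTB.1
      rw [if_neg (by rintro ⟨h, -⟩; exact h hci)] at h1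
      omega
    · rw [if_neg hci]
      by_cases hcc : c ≤ i + 1 - 1
      · have h1 := hTB.1
        rw [if_pos ⟨hci, hc, hcc⟩] at h1
        omega
      · have h1 := hTB.1
        rw [if_neg (by tauto)] at h1
        omega
  constructor
  · simp only [sumColors_node, color]
    exact main
  · intro heq
    simp only [sumColors_node, color] at heq
    have hci : c = i := by
      by_contra hci
      rw [if_neg hci] at main
      omega
    rw [if_pos hci] at main
    rw [hRL, hsplit] at heq
    have hTle := hTB.1
    have hTle' : ((TList i 1).map sumColors).sum ≤ ((l'.drop t).map sumColors).sum :=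
      le_trans (Nat.le_add_right _ _) hTle
    have hAeq : ((l'.take t).map sumColors).sum =
        ((List.replicate t (buildT (i - 1) 1)).map sumColors).sum := by omega
    have hBeq : ((l'.drop t).map sumColors).sum = ((TList i 1).map sumColors).sum := by omega
    have hpwA := zip_sum_eq (List.replicate t (buildT (i - 1) 1)) (l'.take t)
      sumColors sumColors (by rw [hlenA, hlenR]) (fun p h => (keyA p h).1) hAeq.symm
    have hA : List.replicate t (buildT (i - 1) 1) = l'.take t := by
      refine zip_eq_of_pointwise _ _ (by rw [hlenA, hlenR]) ?_
      intro p hp2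
      exact ((keyA p hp2).2 (hpwA p hp2).symm).symm
    have hB : l'.drop t = TList i 1 := hTB.2 hBeq
    rw [hci, hAB, ← hA, hB]

/-- Attaching `t` extra copies of `T_{i-1}^1` below the root of `T_i^1` keeps
the strength equal to `i` and makes the maximum degree `2i - 2 + t`. -/
theorem strength_of_augmented (i t : ℕ) (hi : 2 ≤ i) :
    strengthC (CTree.node i
        (List.replicate t (buildT (i - 1) 1) ++ (buildT i 1).children)) = i ∧
      CTree.maxDeg (CTree.node i
        (List.replicate t (buildT (i - 1) 1) ++ (buildT i 1).children)) =
        2 * i - 2 + t := by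
  have hch : (buildT i 1).children = TList i 1 := by
    rw [buildT_eq_node i 1 (by omega), children]
  rw [hch]
  have hproper : Proper (CTree.node i (List.replicate t (buildT (i - 1) 1) ++ TList i 1)) := by
    rw [proper_node]
    refine ⟨by omega, fun s hs => ?_⟩
    rcases List.mem_append.mp hs with h | h
    · rw [List.eq_of_mem_replicate h, buildT_color]
      exact ⟨by omega, buildT_proper _ _ (by omega)⟩
    · obtain ⟨k, hk1, hk2, hk3, rfl⟩ := mem_TList h
      rw [buildT_color]
      exact ⟨hk3, buildT_proper _ _ hk1⟩
  have hcardF : colorFinset (CTree.node i (List.replicate t (buildT (i - 1) 1) ++ TList i 1)) =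
      Finset.Icc 1 i := by
    rw [colorFinset_node]
    ext x
    simp only [Finset.mem_insert, mem_foldr_union, Finset.mem_Icc, List.mem_append]
    constructor
    · rintro (rfl | ⟨τ, hτ | hτ, hx⟩)
      · omega
      · rw [List.eq_of_mem_replicate hτ,
          buildT_colorFinset (i - 1) 1 (by omega) le_rfl, Finset.mem_Icc] at hx
        omega
      · obtain ⟨k, hk1, hk2, hk3, rfl⟩ := mem_TList hτ
        rw [buildT_colorFinset k ((i + 1 - k + 1) / 2) hk1 (by omega), Finset.mem_Icc] at hx
        omega
    · rintro ⟨hx1, hx2⟩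
      by_cases hxi : x = i
      · exact Or.inl hxi
      · refine Or.inr ⟨buildT x ((i + 1 - x + 1) / 2), Or.inr (TList_mem hx1 (by omega) hxi), ?_⟩
        rw [buildT_colorFinset x ((i + 1 - x + 1) / 2) hx1 (by omega), Finset.mem_Icc]
        omega
  constructor
  · unfold strengthC
    have hmem : i ∈ {n | ∃ g : CTree,
        CTree.SameShape (CTree.node i (List.replicate t (buildT (i - 1) 1) ++ TList i 1)) g ∧
        CTree.Proper g ∧
        (∀ g' : CTree,
          CTree.SameShape (CTree.node i (List.replicate t (buildT (i - 1) 1) ++ TList i 1)) g' →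
          CTree.Proper g' → CTree.sumColors g ≤ CTree.sumColors g') ∧
        g.colorFinset.card = n} := by
      refine ⟨CTree.node i (List.replicate t (buildT (i - 1) 1) ++ TList i 1),
        sameShape_refl _, hproper, fun g' hs' hp' => ?_, ?_⟩
      · exact le_trans (Nat.le_add_right _ _) (aug_min i t hi g' hs' hp').1
      · rw [hcardF, Nat.card_Icc]
        omega
    apply le_antisymm
    · exact Nat.sInf_le hmem
    · apply le_csInf ⟨i, hmem⟩
      rintro b ⟨g, hs, hp, hmin, rfl⟩
      have h1 := aug_min i t hi g hs hp
      have h2 : sumColors g ≤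
          sumColors (CTree.node i (List.replicate t (buildT (i - 1) 1) ++ TList i 1)) :=
        hmin _ (sameShape_refl _) hproper
      have h3 := le_antisymm h2 (le_trans (Nat.le_add_right _ _) h1.1)
      rw [h1.2 h3, hcardF, Nat.card_Icc]
      omega
  · rw [maxDeg_node]
    have hlenT := TList_length i 1 (by omega) (by omega)
    have hbound : (((List.replicate t (buildT (i - 1) 1) ++ TList i 1)).map maxDegAux).foldr
        max 0 ≤ 2 * i - 2 + t := by
      apply foldr_max_le
      intro x hx
      rcases List.mem_append.mp hx with h | h
      · rw [List.eq_of_mem_replicate h]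
        have := buildT_maxDegAux (i - 1) 1 (by omega) le_rfl
        omega
      · obtain ⟨k, hk1, hk2, hk3, rfl⟩ := mem_TList h
        have := buildT_maxDegAux k ((i + 1 - k + 1) / 2) hk1 (by omega)
        omega
    rw [List.length_append, List.length_replicate, hlenT]
    rw [Nat.max_eq_left (le_trans hbound (by omega))]
    omega
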